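/- Let P be the 3rd order, 3-dimensional stochastic tensor with all three frontal slices equal to [[1/2,1/3,1/3],[1/2,1/3,1/3],[0,1/3,1/3]] (so p_{i1 i2 i3} is independent of i3, p_{311} = p_{312} = p_{313} = 0, and all other entries are positive). Then every entry of P^2 is positive (so P is regular, hence ergodic), yet the reduced transition matrix Q of P has identically zero row indexed by the pair (3,1); consequently, for every k ≥ 1 and every pair (j1,j2), the ((3,1),(j1,j2)) entry of Q^k is 0, so the reduced first order chain is neither irreducible nor ergodic. Hence regularity and ergodicity of a higher order chain need not carry over to its reduced first order chain. -/

import Mathlib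

open Finset

/-- A 3rd order, `n`-dimensional tensor: entry `p_{i₁ i₂ i₃}` is `P i₁ i₂ i₃`. -/
abbrev Tensor3 (n : ℕ) := Fin n → Fin n → Fin n → ℝ

/-- The product `A ⊠ B`: `(A ⊠ B)_{i₁ i₂ i₃} = Σ_j a_{i₁ j i₂} b_{j i₂ i₃}`. -/
def tmul3 {n : ℕ} (A B : Tensor3 n) : Tensor3 n :=
  fun i₁ i₂ i₃ => ∑ j : Fin n, A i₁ j i₂ * B j i₂ i₃

/-- Tensor powers: `tpow3 P k` is `P^k`, with entries the `k`-step transition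
probabilities `p^{(k)}_{i₁ i₂ i₃}`; `P^0` is the identity tensor. -/
def tpow3 {n : ℕ} (P : Tensor3 n) : ℕ → Tensor3 n
  | 0 => fun i₁ i₂ _ => if i₁ = i₂ then 1 else 0
  | k + 1 => tmul3 (tpow3 P k) P

/-- `fpp3 P k` is the `(k+1)`-step first passage probability tensor `F^{[k+1]}`:
`f^{[1]} = p` and `f^{[k+1]}_{i₁ i₂ i₃} = Σ_{j ≠ i₁} f^{[k]}_{i₁ j i₂} p_{j i₂ i₃}`. -/
def fpp3 {n : ℕ} (P : Tensor3 n) : ℕ → Tensor3 n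
  | 0 => P
  | k + 1 => fun i₁ i₂ i₃ =>
      ∑ j ∈ Finset.univ.filter (fun j => j ≠ i₁), fpp3 P k i₁ j i₂ * P j i₂ i₃

/-- The ever-reaching probability `f_{i₁ i₂ i₃} = Σ_{k=1}^∞ f^{[k]}_{i₁ i₂ i₃}`. -/
noncomputable def everReach3 {n : ℕ} (P : Tensor3 n) : Tensor3 n :=
  fun i₁ i₂ i₃ => ∑' k : ℕ, fpp3 P k i₁ i₂ i₃

/-- State `j` is reachable from state `i` (`i → j`): for every `i₃` there is
`k ≥ 0` with `p^{(k)}_{j i i₃} > 0`. -/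
def Reach3 {n : ℕ} (P : Tensor3 n) (i j : Fin n) : Prop :=
  ∀ i₃ : Fin n, ∃ k : ℕ, 0 < tpow3 P k j i i₃

/-- The chain is irreducible: for every nonempty proper `K ⊊ S` there are
`i₁ ∈ K` and `i₂, i₃ ∉ K` with `p_{i₁ i₂ i₃} > 0`. -/
def Irreducible3 {n : ℕ} (P : Tensor3 n) : Prop :=
  ∀ K : Set (Fin n), K.Nonempty → K ≠ Set.univ →
    ∃ i₁ ∈ K, ∃ i₂, i₂ ∉ K ∧ ∃ i₃, i₃ ∉ K ∧ 0 < P i₁ i₂ i₃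

/-- The chain is ergodic: for all `i₁ i₂ i₃` there is `k ≥ 1` with `p^{(k)}_{i₁ i₂ i₃} > 0`. -/
def Ergodic3 {n : ℕ} (P : Tensor3 n) : Prop :=
  ∀ i₁ i₂ i₃ : Fin n, ∃ k : ℕ, 1 ≤ k ∧ 0 < tpow3 P k i₁ i₂ i₃

/-- The reduced transition matrix `Q` of a second order chain: rows and columns
are indexed by pairs, `Q (i₁,i₂) (j₁,j₂) = p_{i₁ i₂ j₂}` if `j₁ = i₂`, else `0`. -/
def reduced3 {n : ℕ} (P : Tensor3 n) : Matrix (Fin n × Fin n) (Fin n × Fin n) ℝ :=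
  fun u v => if v.1 = u.2 then P u.1 u.2 v.2 else 0

/-- The transition tensor of Statement 9: all three frontal slices equal
`[[1/2,1/3,1/3],[1/2,1/3,1/3],[0,1/3,1/3]]`. -/
noncomputable def P9 : Tensor3 3 := fun i₁ i₂ _ =>
  !![(1/2 : ℝ), 1/3, 1/3; 1/2, 1/3, 1/3; 0, 1/3, 1/3] i₁ i₂

/-- A (column stochastic) transition matrix is irreducible. -/
def MatIrreducible {s : Type*} (Q : Matrix s s ℝ) : Prop :=
  ∀ K : Set s, K.Nonempty → K ≠ Set.univ → ∃ a ∈ K, ∃ b, b ∉ K ∧ 0 < Q a b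

/-- A first order chain with transition matrix `Q` is ergodic. -/
def MatErgodic {s : Type*} [Fintype s] [DecidableEq s] (Q : Matrix s s ℝ) : Prop :=
  ∀ a b : s, ∃ k : ℕ, 1 ≤ k ∧ 0 < (Q ^ k) a b

/-! The row of `Q` indexed by `(3,1)` is `p_{3 1 ·} = 0`, so the chain of `Q` can never leave the
pair `(3,1)`, while in `P²` every entry is positive because the intermediate state `2` is
reachable from everywhere and reaches everything in one step. States are 0-based in `Fin 3`:
the pair `(3,1)` is `(2, 0)` and state `2` is `1`. -/

section ZeroRow

variable {s : Type*} {Q : Matrix s s ℝ} {a : s}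

theorem Matrix.pow_apply_eq_zero_of_row_eq_zero [Fintype s] [DecidableEq s]
    (hrow : ∀ b, Q a b = 0) {k : ℕ} (hk : 1 ≤ k) (b : s) : (Q ^ k) a b = 0 := by
  obtain ⟨m, rfl⟩ := Nat.exists_eq_add_of_le' hk
  rw [pow_succ', Matrix.mul_apply]
  exact Finset.sum_eq_zero fun c _ => by rw [hrow c, zero_mul]

theorem not_matIrreducible_of_row_eq_zero [Nontrivial s] (hrow : ∀ b, Q a b = 0) :
    ¬ MatIrreducible Q := by
  intro hQ
  obtain ⟨a', ha', b, -, hpos⟩ := hQ {a} (Set.singleton_nonempty a) (Set.singleton_ne_univ a)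
  rw [Set.mem_singleton_iff.mp ha', hrow b] at hpos
  exact hpos.false

theorem not_matErgodic_of_row_eq_zero [Fintype s] [DecidableEq s] (hrow : ∀ b, Q a b = 0) :
    ¬ MatErgodic Q := by
  intro hQ
  obtain ⟨k, hk, hpos⟩ := hQ a a
  rw [Matrix.pow_apply_eq_zero_of_row_eq_zero hrow hk] at hpos
  exact hpos.false

end ZeroRow

theorem reduced3_row_eq_zero {n : ℕ} {P : Tensor3 n} {i j : Fin n} (h : ∀ l, P i j l = 0)
    (c : Fin n × Fin n) : reduced3 P (i, j) c = 0 := by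
  unfold reduced3
  split_ifs
  · exact h c.2
  · rfl

theorem tpow3_one {n : ℕ} (P : Tensor3 n) : tpow3 P 1 = P := by
  funext i₁ i₂ i₃
  simp [tpow3, tmul3]

theorem tpow3_two_apply {n : ℕ} (P : Tensor3 n) (i₁ i₂ i₃ : Fin n) :
    tpow3 P 2 i₁ i₂ i₃ = ∑ j, P i₁ j i₂ * P j i₂ i₃ := by
  rw [tpow3, tpow3_one, tmul3]

theorem tpow3_two_pos_of_pivot {n : ℕ} {P : Tensor3 n} (hP : ∀ i₁ i₂ i₃, 0 ≤ P i₁ i₂ i₃)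
    (j : Fin n) (hto : ∀ i₁ i₂, 0 < P i₁ j i₂) (hfrom : ∀ i₂ i₃, 0 < P j i₂ i₃)
    (i₁ i₂ i₃ : Fin n) : 0 < tpow3 P 2 i₁ i₂ i₃ := by
  rw [tpow3_two_apply]
  exact Finset.sum_pos' (fun k _ => mul_nonneg (hP _ _ _) (hP _ _ _))
    ⟨j, Finset.mem_univ j, mul_pos (hto i₁ i₂) (hfrom i₂ i₃)⟩

theorem P9_nonneg (i₁ i₂ i₃ : Fin 3) : 0 ≤ P9 i₁ i₂ i₃ := by
  fin_cases i₁ <;> fin_cases i₂ <;> norm_num [P9]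

theorem P9_apply_one_left_pos (i₂ i₃ : Fin 3) : 0 < P9 1 i₂ i₃ := by
  fin_cases i₂ <;> norm_num [P9]

theorem P9_apply_one_mid_pos (i₁ i₃ : Fin 3) : 0 < P9 i₁ 1 i₃ := by
  fin_cases i₁ <;> norm_num [P9]

theorem P9_apply_two_zero (i₃ : Fin 3) : P9 2 0 i₃ = 0 := by
  simp [P9]

theorem regular_not_inherited :
    (∀ i₁ i₂ i₃ : Fin 3, 0 < tpow3 P9 2 i₁ i₂ i₃) ∧
    (∀ c : Fin 3 × Fin 3, reduced3 P9 (2, 0) c = 0) ∧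
    (∀ k : ℕ, 1 ≤ k → ∀ c : Fin 3 × Fin 3, (reduced3 P9 ^ k) (2, 0) c = 0) ∧
    ¬ MatIrreducible (reduced3 P9) ∧
    ¬ MatErgodic (reduced3 P9) := by
  have hrow := reduced3_row_eq_zero P9_apply_two_zero
  exact ⟨tpow3_two_pos_of_pivot P9_nonneg 1 P9_apply_one_mid_pos P9_apply_one_left_pos, hrow,
    fun _ hk => Matrix.pow_apply_eq_zero_of_row_eq_zero hrow hk,
    not_matIrreducible_of_row_eq_zero hrow, not_matErgodic_of_row_eq_zero hrow⟩
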